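/- Let F = (F^(1),...,F^(K)) be a relaxed chronology of standard zero forces for a zero forcing set B of a graph G, and for N ∈ {0,...,K} let V^{N−} be the vertices whose active time-steps are contained in {0,...,N−1}, V^N the vertices active after time-step N, and V^{N+} the vertices whose active time-steps are contained in {N+1,...,K}. Then no vertex of V^{N−} is adjacent to a vertex of V^{N+}; in particular, if both V^{N−} and V^{N+} are nonempty, then V^N is a vertex cut of G. -/
import Mathlib


namespace ZF

variable {V : Type*} [Fintype V] [DecidableEq V]

/-- A valid standard zero forcing force within the vertex set `U`, given blue set `B`:
`u` is blue, `v` is its unique white neighbor in `U`. -/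
def ZFValid (G : SimpleGraph V) (U B : Set V) (u v : V) : Prop :=
  u ∈ U ∧ v ∈ U ∧ u ∈ B ∧ v ∉ B ∧ G.Adj u v ∧
    ∀ w ∈ U, G.Adj u w → w ∉ B → w = v

/-- `whiteConn G U B a b` : `a` and `b` are joined by a walk through white
(non-blue) vertices of `U` (possibly trivial). -/
def whiteConn (G : SimpleGraph V) (U B : Set V) : V → V → Prop :=
  Relation.ReflTransGen (fun a b => G.Adj a b ∧ a ∈ U ∧ b ∈ U ∧ a ∉ B ∧ b ∉ B)

/-- A valid PSD force within the vertex set `U`, given blue set `B`: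
`u` is blue and `v` is the unique neighbor of `u` in the component of the
white subgraph containing `v`. -/
def PSDValid (G : SimpleGraph V) (U B : Set V) (u v : V) : Prop :=
  u ∈ U ∧ v ∈ U ∧ u ∈ B ∧ v ∉ B ∧ G.Adj u v ∧
    ∀ w ∈ U, G.Adj u w → w ∉ B → whiteConn G U B v w → w = v

/-- One propagation step for a generic color change rule `valid`. -/
def step (valid : Set V → V → V → Prop) (B : Set V) : Set V :=
  B ∪ {v | ∃ u, valid B u v}

/-- Iterated propagation. -/
def iter (valid : Set V → V → V → Prop) (B : Set V) : ℕ → Set V :=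
  fun k => (step valid)^[k] B

/-- `B ⊆ U` is a forcing set of the induced subgraph on `U` for the rule `valid`. -/
def IsForcingSet (valid : Set V → V → V → Prop) (U B : Set V) : Prop :=
  B ⊆ U ∧ ∃ k, U ⊆ iter valid B k

/-- Propagation time of the set `B` for rule `valid` on the induced subgraph on `U`. -/
noncomputable def propTime (valid : Set V → V → V → Prop) (U B : Set V) : ℕ :=
  sInf {k | U ⊆ iter valid B k}

/-- Vertices blue after `k` time-steps of the family of forces `F`, starting from `B`. -/
def expand (B : Set V) (F : ℕ → Set (V × V)) : ℕ → Set V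
  | 0 => B
  | k + 1 => expand B F k ∪ {v | ∃ u, (u, v) ∈ F (k + 1)}

/-- A relaxed chronology of forces (for the rule `valid`) for the forcing set `B`
on the induced subgraph on `U`, with completion time `K`: at each time-step an
arbitrary subset of the currently valid forces is performed (no vertex being
forced twice in one step), and all of `U` is blue after step `K`. -/
structure RelaxedChron (valid : Set V → V → V → Prop) (U B : Set V)
    (K : ℕ) (F : ℕ → Set (V × V)) : Prop where
  subset : B ⊆ U
  init : F 0 = ∅
  bound : ∀ k, K < k → F k = ∅
  forcesValid : ∀ k < K, ∀ u v, (u, v) ∈ F (k + 1) → valid (expand B F k) u v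
  uniqueForcer : ∀ k u₁ u₂ v, (u₁, v) ∈ F k → (u₂, v) ∈ F k → u₁ = u₂
  complete : U ⊆ expand B F K

/-- The underlying set of forces of a relaxed chronology. -/
def forcesOf (F : ℕ → Set (V × V)) (K : ℕ) : Set (V × V) :=
  {p | ∃ k, 1 ≤ k ∧ k ≤ K ∧ p ∈ F k}

/-- The terminus of a relaxed chronology: the vertices (of `U`) performing no force. -/
def terminus (U : Set V) (F : ℕ → Set (V × V)) (K : ℕ) : Set V :=
  {v ∈ U | ∀ u, (v, u) ∉ forcesOf F K}

/-- The reversal of a relaxed chronology: each force is reversed and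
the order of the time-steps is reversed. -/
def revChron (F : ℕ → Set (V × V)) (K : ℕ) : ℕ → Set (V × V) :=
  fun k => if 1 ≤ k ∧ k ≤ K then {p | (p.2, p.1) ∈ F (K - k + 1)} else ∅

/-- One round of performing all currently valid forces from the set of forces `S`. -/
def forceStep (valid : Set V → V → V → Prop) (S : Set (V × V)) (B : Set V) : Set V :=
  B ∪ {v | ∃ u, (u, v) ∈ S ∧ valid B u v}

def forceIter (valid : Set V → V → V → Prop) (S : Set (V × V)) (B : Set V) : ℕ → Set V :=
  fun t => (forceStep valid S)^[t] B

/-- Propagation time of a set of forces `S` for starting set `B` on `U`. -/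
noncomputable def ptForces (valid : Set V → V → V → Prop) (U : Set V)
    (S : Set (V × V)) (B : Set V) : ℕ :=
  sInf {t | U ⊆ forceIter valid S B t}

/-- `v` is active at time-step `k` of the relaxed chronology `F`:
it is blue after step `k` and has not yet performed a force. -/
def activeAt (B : Set V) (F : ℕ → Set (V × V)) (v : V) (k : ℕ) : Prop :=
  v ∈ expand B F k ∧ ∀ j ≤ k, ∀ u, (v, u) ∉ F j

/-- The zero forcing number. -/
noncomputable def Z (G : SimpleGraph V) : ℕ :=
  sInf {n | ∃ B : Set V, B.ncard = n ∧ IsForcingSet (ZFValid G Set.univ) Set.univ B}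

/-- The PSD forcing number. -/
noncomputable def Zplus (G : SimpleGraph V) : ℕ :=
  sInf {n | ∃ B : Set V, B.ncard = n ∧ IsForcingSet (PSDValid G Set.univ) Set.univ B}

/-- Standard `m`-propagation time `pt(G,m)`. -/
noncomputable def ptm (G : SimpleGraph V) (m : ℕ) : ℕ :=
  sInf {t | ∃ B : Set V, B.ncard = m ∧ IsForcingSet (ZFValid G Set.univ) Set.univ B ∧
    propTime (ZFValid G Set.univ) Set.univ B = t}

/-- PSD `m`-propagation time `pt₊(G,m)`. -/
noncomputable def ptplusm (G : SimpleGraph V) (m : ℕ) : ℕ :=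
  sInf {t | ∃ B : Set V, B.ncard = m ∧ IsForcingSet (PSDValid G Set.univ) Set.univ B ∧
    propTime (PSDValid G Set.univ) Set.univ B = t}

/-- Standard propagation time `pt(G)`. -/
noncomputable def pt (G : SimpleGraph V) : ℕ := ptm G (Z G)

/-- PSD propagation time `pt₊(G)`. -/
noncomputable def ptplus (G : SimpleGraph V) : ℕ := ptplusm G (Zplus G)

/-- PSD throttling number `thr₊(G)`. -/
noncomputable def thrplus (G : SimpleGraph V) : ℕ :=
  sInf {t | ∃ B : Set V, IsForcingSet (PSDValid G Set.univ) Set.univ B ∧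
    t = B.ncard + propTime (PSDValid G Set.univ) Set.univ B}

/-- Closed neighborhood of a set. -/
def closedNbhd (G : SimpleGraph V) (B : Set V) : Set V :=
  B ∪ {v | ∃ u ∈ B, G.Adj u v}

/-- Power domination process: the first step colors the closed neighborhood,
subsequent steps apply the standard zero forcing rule. -/
def pdIter (G : SimpleGraph V) (B : Set V) : ℕ → Set V
  | 0 => B
  | 1 => closedNbhd G B
  | (k + 2) => step (ZFValid G Set.univ) (pdIter G B (k + 1))

/-- `B` is a power dominating set. -/
def IsPDSet (G : SimpleGraph V) (B : Set V) : Prop :=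
  ∃ k, Set.univ ⊆ pdIter G B k

/-- Power propagation time of a set. -/
noncomputable def pdPropTime (G : SimpleGraph V) (B : Set V) : ℕ :=
  sInf {k | Set.univ ⊆ pdIter G B k}

/-- Power `m`-propagation time `ppt(G,m)`. -/
noncomputable def pptm (G : SimpleGraph V) (m : ℕ) : ℕ :=
  sInf {t | ∃ B : Set V, B.ncard = m ∧ IsPDSet G B ∧ pdPropTime G B = t}

/-- Restriction of a family of forces to those with both endpoints in `W`. -/
def restrictF (F : ℕ → Set (V × V)) (W : Set V) : ℕ → Set (V × V) :=
  fun k => {p ∈ F k | p.1 ∈ W ∧ p.2 ∈ W}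

/-- The forcing tree of `b` : all vertices reachable from `b` by a chain of forces in `S`. -/
def treeOf (S : Set (V × V)) (b : V) : Set V :=
  {w | Relation.ReflTransGen (fun a c => (a, c) ∈ S) b w}

open Classical in
/-- The endpoint, after `k` steps, of the path grown from `b ∈ B` in the
path bundle of the relaxed chronology `F` induced by the vertex `x`: the path is
extended by a force from its current endpoint into the component of white
vertices containing `x`, whenever such a force occurs. -/
noncomputable def lastVert (G : SimpleGraph V) (B : Set V) (F : ℕ → Set (V × V))
    (x : V) (b : V) : ℕ → V
  | 0 => b
  | k + 1 =>
    if h : ∃ w, (lastVert G B F x b k, w) ∈ F (k + 1) ∧ x ∉ expand B F k ∧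
        whiteConn G Set.univ (expand B F k) x w
    then h.choose else lastVert G B F x b k

/-- The vertex set of the path bundle of `F` induced by `x`. -/
def bundle (G : SimpleGraph V) (B : Set V) (F : ℕ → Set (V × V)) (x : V) (K : ℕ) : Set V :=
  {v | ∃ b ∈ B, ∃ j ≤ K, lastVert G B F x b j = v}

/-- The path of the bundle grown from `b`, as a list of vertices. -/
noncomputable def bundlePath (G : SimpleGraph V) (B : Set V) (F : ℕ → Set (V × V))
    (x : V) (K : ℕ) (b : V) : List V :=
  ((List.range (K + 1)).map (lastVert G B F x b)).dedup

/-- A nonempty path in `G`, given as a list of distinct consecutively adjacent vertices. -/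
def IsPathList (G : SimpleGraph V) (l : List V) : Prop :=
  l ≠ [] ∧ l.Nodup ∧ l.Chain' G.Adj

/-- `P` is an `(α,β)`-linkage: a collection of pairwise vertex-disjoint paths,
`α` consisting of one endpoint of each path and `β` of the other endpoints. -/
def IsLinkage (G : SimpleGraph V) (α β : Set V) (P : Set (List V)) : Prop :=
  (∀ l ∈ P, IsPathList G l) ∧
  (∀ l ∈ P, ∀ l' ∈ P, l ≠ l' → ∀ v, v ∈ l → v ∉ l') ∧
  (∀ l ∈ P, ∀ l' ∈ P, l.head? = l'.head? → l = l') ∧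
  (∀ l ∈ P, ∀ l' ∈ P, l.getLast? = l'.getLast? → l = l') ∧
  α = {v | ∃ l ∈ P, l.head? = some v} ∧
  β = {v | ∃ l ∈ P, l.getLast? = some v}

/-- `P` is a rigid linkage: for some `α`, `β` it is the unique `(α,β)`-linkage in `G`. -/
def IsRigidLinkage (G : SimpleGraph V) (P : Set (List V)) : Prop :=
  ∃ α β, IsLinkage G α β P ∧ ∀ P', IsLinkage G α β P' → P' = P

/-- A path cover of `G` : `m` vertex-disjoint induced paths covering all vertices,
the `i`-th path having vertices `vtx i 0, …, vtx i (n i − 1)` in path order. -/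
structure IsPathCover (G : SimpleGraph V) (m : ℕ) (n : Fin m → ℕ)
    (vtx : (i : Fin m) → Fin (n i) → V) : Prop where
  pos : ∀ i, 0 < n i
  inj : Function.Injective (fun p : (i : Fin m) × Fin (n i) => vtx p.1 p.2)
  cover : ∀ v : V, ∃ i j, vtx i j = v
  induced : ∀ i (j j' : Fin (n i)),
    G.Adj (vtx i j) (vtx i j') ↔ ((j : ℕ) + 1 = (j' : ℕ) ∨ (j' : ℕ) + 1 = (j : ℕ))

/-- A witness that a path cover is a parallel increasing path cover: a collection of
block partitions of `{0,…,K}`, one per path, compatible with the edges of `G`. -/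
structure IsPIPWitness (G : SimpleGraph V) (m : ℕ) (n : Fin m → ℕ)
    (vtx : (i : Fin m) → Fin (n i) → V) (K : ℕ)
    (A : (i : Fin m) → Fin (n i) → Finset ℕ) : Prop where
  mem : ∀ i j, A i j ⊆ Finset.range (K + 1)
  nonempty : ∀ i j, (A i j).Nonempty
  partition : ∀ i, ∀ x ∈ Finset.range (K + 1), ∃! j, x ∈ A i j
  mono : ∀ i (j j' : Fin (n i)), (j : ℕ) < (j' : ℕ) → ∀ x ∈ A i j, ∀ y ∈ A i j', x < y
  edge : ∀ (i i' : Fin m) j j', i ≠ i' →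
    G.Adj (vtx i j) (vtx i' j') → ((A i j) ∩ (A i' j')).Nonempty

/-- A parallel increasing path cover of `G`. -/
def IsPIP (G : SimpleGraph V) (m : ℕ) (n : Fin m → ℕ)
    (vtx : (i : Fin m) → Fin (n i) → V) : Prop :=
  IsPathCover G m n vtx ∧ ∃ K A, IsPIPWitness G m n vtx K A

/-- The path cover given by `vtx` is the chain set of the family of forces `F` :
the underlying forces are exactly the consecutive pairs along the paths. -/
def IsChainSetOf (m : ℕ) (n : Fin m → ℕ) (vtx : (i : Fin m) → Fin (n i) → V)
    (F : ℕ → Set (V × V)) (K : ℕ) : Prop :=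
  ∀ u w, (u, w) ∈ forcesOf F K ↔
    ∃ (i : Fin m) (j : Fin (n i)) (j' : Fin (n i)),
      u = vtx i j ∧ w = vtx i j' ∧ (j : ℕ) + 1 = (j' : ℕ)

end ZF

section ActiveCutAux

variable {V : Type*} [Fintype V] [DecidableEq V]

lemma expand_mono (B : Set V) (F : ℕ → Set (V × V)) :
    Monotone (ZF.expand B F) :=
  monotone_nat_of_le_succ (fun _ => Set.subset_union_left)

lemma firstActive (G : SimpleGraph V) (B : Set V) (K : ℕ) (F : ℕ → Set (V × V))
    (hF : ZF.RelaxedChron (ZF.ZFValid G Set.univ) Set.univ B K F)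
    {v : V} {M : ℕ} (hv : v ∈ ZF.expand B F M) (hM : M ≤ K) :
    ∃ k ≤ M, ZF.activeAt B F v k := by
  classical
  have hex : ∃ k, v ∈ ZF.expand B F k := ⟨M, hv⟩
  refine ⟨Nat.find hex, Nat.find_min' hex hv, Nat.find_spec hex, ?_⟩
  intro j hj u hju
  obtain ⟨j', rfl⟩ : ∃ j', j = j' + 1 := by
    rcases Nat.eq_zero_or_pos j with h0 | h0
    · exfalso; rw [h0, hF.init] at hju; exact hju
    · exact ⟨j - 1, by omega⟩
  have hj'K : j' < K := by
    have := Nat.find_min' hex hv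
    omega
  have := hF.forcesValid j' hj'K v u hju
  exact Nat.find_min hex (by omega) this.2.2.1

lemma minus_white_force (G : SimpleGraph V) (B : Set V) (K : ℕ) (F : ℕ → Set (V × V))
    (hF : ZF.RelaxedChron (ZF.ZFValid G Set.univ) Set.univ B K F)
    {N : ℕ} (hN : N ≤ K) {u : V}
    (hu : ∀ k ≤ K, ZF.activeAt B F u k → k < N) :
    ∃ j, 1 ≤ j ∧ j ≤ N ∧ ∃ x, (u, x) ∈ F j ∧
      ZF.ZFValid G Set.univ (ZF.expand B F (j - 1)) u x := by
  classical
  have huK : u ∈ ZF.expand B F K := hF.complete (Set.mem_univ u)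
  obtain ⟨k₀, hk₀K, hact⟩ := firstActive G B K F hF huK le_rfl
  have hk₀N : k₀ < N := hu k₀ hk₀K hact
  have huN : u ∈ ZF.expand B F N := expand_mono B F (le_of_lt hk₀N) hact.1
  by_cases hforce : ∃ j ≤ N, ∃ x, (u, x) ∈ F j
  · obtain ⟨j, hjN, x, hx⟩ := hforce
    obtain ⟨j', rfl⟩ : ∃ j', j = j' + 1 := by
      rcases Nat.eq_zero_or_pos j with h0 | h0
      · exfalso; rw [h0, hF.init] at hx; exact hx
      · exact ⟨j - 1, by omega⟩
    have hj'K : j' < K := by omega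
    exact ⟨j' + 1, by omega, hjN, x, hx, by
      simpa using hF.forcesValid j' hj'K u x hx⟩
  · exfalso
    push_neg at hforce
    have : ZF.activeAt B F u N := ⟨huN, fun j hj x => hforce j hj x⟩
    exact absurd (hu N hN this) (lt_irrefl N)

lemma plus_not_blue (G : SimpleGraph V) (B : Set V) (K : ℕ) (F : ℕ → Set (V × V))
    (hF : ZF.RelaxedChron (ZF.ZFValid G Set.univ) Set.univ B K F)
    {N : ℕ} (hN : N ≤ K) {w : V}
    (hw : ∀ k ≤ K, ZF.activeAt B F w k → N < k) :
    w ∉ ZF.expand B F N := by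
  intro hwN
  obtain ⟨k, hkN, hact⟩ := firstActive G B K F hF hwN hN
  exact absurd (hw k (le_trans hkN hN) hact) (by omega)

lemma active_not_adj (G : SimpleGraph V) (B : Set V) (K : ℕ) (F : ℕ → Set (V × V))
    (hF : ZF.RelaxedChron (ZF.ZFValid G Set.univ) Set.univ B K F)
    {N : ℕ} (hN : N ≤ K) {u w : V}
    (hu : ∀ k ≤ K, ZF.activeAt B F u k → k < N)
    (hw : ∀ k ≤ K, ZF.activeAt B F w k → N < k) :
    ¬ G.Adj u w := by
  intro hadj
  obtain ⟨j, hj1, hjN, x, hx, hvalid⟩ := minus_white_force G B K F hF hN hu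
  have hwN : w ∉ ZF.expand B F N := plus_not_blue G B K F hF hN hw
  have hwj : w ∉ ZF.expand B F (j - 1) := fun h => hwN (expand_mono B F (by omega) h)
  have : w = x := hvalid.2.2.2.2.2 w (Set.mem_univ w) hadj hwj
  subst this
  apply hwN
  have : w ∈ ZF.expand B F j := by
    obtain ⟨j', rfl⟩ : ∃ j', j = j' + 1 := ⟨j - 1, by omega⟩
    exact Or.inr ⟨u, hx⟩
  exact expand_mono B F hjN this

end ActiveCutAux

/-- For a relaxed chronology of standard forces, no vertex all of whose active times precede
`N` is adjacent to a vertex all of whose active times exceed `N`; in particular, if both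
such sets are nonempty, removing the vertices active at time `N` disconnects `G`. -/
theorem active_cut {V : Type*} [Fintype V] [DecidableEq V]
    (G : SimpleGraph V) (B : Set V) (K : ℕ) (F : ℕ → Set (V × V))
    (hF : ZF.RelaxedChron (ZF.ZFValid G Set.univ) Set.univ B K F)
    (N : ℕ) (hN : N ≤ K) :
    (∀ u ∈ {v : V | ∀ k ≤ K, ZF.activeAt B F v k → k < N},
      ∀ w ∈ {v : V | ∀ k ≤ K, ZF.activeAt B F v k → N < k}, ¬ G.Adj u w) ∧
    (G.Connected →
      {v : V | ∀ k ≤ K, ZF.activeAt B F v k → k < N}.Nonempty →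
      {v : V | ∀ k ≤ K, ZF.activeAt B F v k → N < k}.Nonempty →
      ¬ (G.induce {v : V | ¬ ZF.activeAt B F v N}).Connected) := by
  classical
  set Vm := {v : V | ∀ k ≤ K, ZF.activeAt B F v k → k < N} with hVm
  set Vp := {v : V | ∀ k ≤ K, ZF.activeAt B F v k → N < k} with hVp
  set S := {v : V | ¬ ZF.activeAt B F v N} with hS
  have hdisj : ∀ v, v ∈ Vm → v ∈ Vp → False := by
    intro v hvm hvp
    have hvK : v ∈ ZF.expand B F K := hF.complete (Set.mem_univ v)
    obtain ⟨k, hkK, hact⟩ := firstActive G B K F hF hvK le_rfl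
    have := hvm k hkK hact
    have := hvp k hkK hact
    omega
  have hpart : ∀ v ∈ S, v ∈ Vm ∨ v ∈ Vp := by
    intro v hv
    by_cases hforce : ∃ j ≤ N, ∃ x, (v, x) ∈ F j
    · obtain ⟨j, hjN, x, hx⟩ := hforce
      left
      intro k hk hact
      by_contra hlt
      exact hact.2 j (by omega) x hx
    · push_neg at hforce
      have hvN : v ∉ ZF.expand B F N := by
        intro h
        exact hv ⟨h, fun j hj x => hforce j hj x⟩
      right
      intro k hk hact
      by_contra hlt
      exact hvN (expand_mono B F (by omega) hact.1)
  refine ⟨fun u hu w hw => active_not_adj G B K F hF hN hu hw, ?_⟩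
  intro _ ⟨u, hu⟩ ⟨w, hw⟩ hconn
  have huS : u ∈ S := fun h => absurd (hu N hN h) (lt_irrefl N)
  have hwS : w ∈ S := fun h => absurd (hw N hN h) (lt_irrefl N)
  have hreach := hconn.preconnected ⟨u, huS⟩ ⟨w, hwS⟩
  obtain ⟨p⟩ := hreach
  have key : ∀ (a b : ↥S) (p : (G.induce S).Walk a b), ↑a ∈ Vm → ↑b ∈ Vm := by
    intro a b p
    induction p with
    | nil => exact id
    | @cons a c b h p ih =>
      intro ha
      apply ih
      rcases hpart c.val c.property with hc | hc
      · exact hc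
      · exact absurd h (active_not_adj G B K F hF hN ha hc)
  exact hdisj w (key _ _ p hu) hw
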